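/- The best approximation with bounded TT-ranks exists: for any real tensor A of shape n_1 × … × n_d and any rank bounds (r_1,…,r_{d−1}), the infimum of ‖A − B‖_F over the set of tensors B of the same shape with rank(B^{⟨k⟩}) ≤ r_k for all k = 1,…,d−1 is attained by some tensor B*. -/

import Mathlib

open scoped BigOperators
open Matrix

/-- A `d`-dimensional real tensor of shape `n 0 × ⋯ × n (d-1)`. -/
abbrev Tensor {d : ℕ} (n : Fin d → ℕ) : Type := (∀ i, Fin (n i)) → ℝ

/-- The `k`-th sequential unfolding `A⟨k⟩`: rows indexed by the first `k`
indices, columns indexed by the remaining ones. -/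
def seqUnfold {d : ℕ} {n : Fin d → ℕ} (A : Tensor n) (k : ℕ) :
    Matrix (∀ i : {j : Fin d // j.val < k}, Fin (n i.1))
      (∀ i : {j : Fin d // ¬ j.val < k}, Fin (n i.1)) ℝ :=
  fun a b => A fun i => if h : i.val < k then a ⟨i, h⟩ else b ⟨i, h⟩

/-- Frobenius norm of a tensor. -/
noncomputable def frobNorm {d : ℕ} {n : Fin d → ℕ} (X : Tensor n) : ℝ :=
  Real.sqrt (∑ i, X i ^ 2)

open Filter

/-! Each unfolding depends linearly on the tensor and matrix rank is lower semicontinuous, so the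
tensors with bounded TT-ranks form a closed set containing `0`. The distance to `A` is
coercive, hence it attains its infimum on that closed set. -/

theorem Matrix.isClosed_setOf_rank_le {m n 𝕜 : Type*} [NontriviallyNormedField 𝕜]
    [CompleteSpace 𝕜] [Fintype m] [Fintype n] (r : ℕ) :
    IsClosed {M : Matrix m n 𝕜 | M.rank ≤ r} := by
  classical
  let toCLM : Matrix m n 𝕜 →ₗ[𝕜] (n → 𝕜) →L[𝕜] (m → 𝕜) :=
    LinearMap.toContinuousLinearMap.toLinearMap ∘ₗ Matrix.toLin'.toLinearMap
  have hrank (M : Matrix m n 𝕜) :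
      (toCLM M : (n → 𝕜) →ₗ[𝕜] (m → 𝕜)).rank = M.rank := by
    simp only [toCLM, LinearMap.rank, Matrix.rank, Module.finrank_eq_rank]
    rfl
  convert ((isOpen_setOfPred_nat_le_rank (r + 1)).preimage
    (LinearMap.continuous_of_finiteDimensional toCLM)).isClosed_compl using 1
  ext M
  simp [hrank]

theorem IsClosed.exists_isLeast_image_of_tendsto_cocompact {X : Type*} [TopologicalSpace X]
    {s : Set X} {f : X → ℝ} (hs : IsClosed s) (hne : s.Nonempty) (hf : Continuous f)
    (hcoer : Tendsto f (cocompact X) atTop) : ∃ x ∈ s, IsLeast (f '' s) (f x) := by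
  obtain ⟨x₀, hx₀⟩ := hne
  obtain ⟨x, hx, hmin⟩ := hf.continuousOn.exists_isMinOn' hs hx₀
    ((hcoer.eventually_ge_atTop (f x₀)).filter_mono inf_le_left)
  exact ⟨x, hx, Set.mem_image_of_mem f hx, Set.forall_mem_image.2 hmin⟩

theorem continuous_seqUnfold {d : ℕ} {n : Fin d → ℕ} (k : ℕ) :
    Continuous fun A : Tensor n => seqUnfold A k :=
  continuous_pi fun _ => continuous_pi fun _ => continuous_apply _

theorem continuous_frobNorm {d : ℕ} {n : Fin d → ℕ} : Continuous (frobNorm : Tensor n → ℝ) := by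
  unfold frobNorm
  fun_prop

theorem norm_le_frobNorm {d : ℕ} {n : Fin d → ℕ} (X : Tensor n) : ‖X‖ ≤ frobNorm X :=
  (pi_norm_le_iff_of_nonneg (Real.sqrt_nonneg _)).2 fun i =>
    Real.abs_le_sqrt (Finset.single_le_sum (fun j _ => sq_nonneg (X j)) (Finset.mem_univ i))

theorem tendsto_frobNorm_sub_cocompact {d : ℕ} {n : Fin d → ℕ} (A : Tensor n) :
    Tendsto (fun B => frobNorm (A - B)) (cocompact (Tensor n)) atTop := by
  refine tendsto_atTop_mono (fun B => ?_)
    (tendsto_atTop_add_const_right _ (-‖A‖) tendsto_norm_cocompact_atTop)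
  calc ‖B‖ + -‖A‖ ≤ ‖A - B‖ := by linarith [norm_sub_norm_le B A, norm_sub_rev A B]
    _ ≤ frobNorm (A - B) := norm_le_frobNorm _

def ttRankLE {d : ℕ} (n : Fin d → ℕ) (r : ℕ → ℕ) : Set (Tensor n) :=
  {B | ∀ k : ℕ, 1 ≤ k → k ≤ d - 1 → (seqUnfold B k).rank ≤ r k}

theorem isClosed_ttRankLE {d : ℕ} (n : Fin d → ℕ) (r : ℕ → ℕ) : IsClosed (ttRankLE n r) := by
  simp only [ttRankLE, Set.ofPred_forall]
  exact isClosed_iInter fun k => isClosed_iInter fun _ => isClosed_iInter fun _ =>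
    (Matrix.isClosed_setOf_rank_le (r k)).preimage (continuous_seqUnfold k)

theorem zero_mem_ttRankLE {d : ℕ} (n : Fin d → ℕ) (r : ℕ → ℕ) : (0 : Tensor n) ∈ ttRankLE n r :=
  fun k _ _ => by simp [show seqUnfold (0 : Tensor n) k = 0 from rfl]

/-- the best approximation with TT-ranks bounded by
`(r 1, …, r (d−1))` exists: the infimum of `‖A − B‖_F` over all tensors `B`
with `rank (B⟨k⟩) ≤ r k` for `k = 1,…,d−1` is attained by some `B*`. -/
theorem tt_best_approx_exists {d : ℕ} {n : Fin d → ℕ} (A : Tensor n)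
    (r : ℕ → ℕ) :
    ∃ Bstar : Tensor n,
      (∀ k : ℕ, 1 ≤ k → k ≤ d - 1 → (seqUnfold Bstar k).rank ≤ r k) ∧
      frobNorm (A - Bstar) =
        sInf {t : ℝ | ∃ B : Tensor n,
          (∀ k : ℕ, 1 ≤ k → k ≤ d - 1 → (seqUnfold B k).rank ≤ r k) ∧
          t = frobNorm (A - B)} := by
  obtain ⟨Bstar, hBstar, hleast⟩ :=
    (isClosed_ttRankLE n r).exists_isLeast_image_of_tendsto_cocompact (f := (frobNorm <| A - ·))
      ⟨0, zero_mem_ttRankLE n r⟩ (continuous_frobNorm.comp (continuous_sub_left A))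
      (tendsto_frobNorm_sub_cocompact A)
  refine ⟨Bstar, hBstar, ?_⟩
  have hset : {t : ℝ | ∃ B : Tensor n,
      (∀ k : ℕ, 1 ≤ k → k ≤ d - 1 → (seqUnfold B k).rank ≤ r k) ∧ t = frobNorm (A - B)} =
      (frobNorm <| A - ·) '' ttRankLE n r := by
    ext t
    simp only [ttRankLE, Set.mem_ofPred_eq, Set.mem_image, eq_comm]
  rw [hset, hleast.csInf_eq]
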